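/- Let $\beta\ge1$ and let $\Phi_\beta$ be the CDF of the $\beta$-Gaussian density $\varphi_\beta(y)=\frac{1}{2\beta^{1/\beta}\Gamma(1+1/\beta)}e^{-|y|^{\beta}/\beta}$. Then for all $t\in(0,\tfrac12)$, $\exp\big(\tfrac{1}{\beta}|\Phi_\beta^{-1}(t)|^{\beta}\big)\le \frac{1}{t}$. -/

import Mathlib

/-- The generalized `β`-Gaussian probability density on `ℝ`. -/
noncomputable def phiBeta (β y : ℝ) : ℝ :=
  1 / (2 * β ^ (1 / β) * Real.Gamma (1 + 1 / β)) * Real.exp (-|y| ^ β / β)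

/-- The cumulative distribution function of the `β`-Gaussian distribution. -/
noncomputable def PhiBeta (β w : ℝ) : ℝ := ∫ y in Set.Iic w, phiBeta β y

/-!
Superadditivity of `r ↦ r ^ β` for `β ≥ 1` gives `φ(x + w) ≤ e^{-|w|^β/β} φ(x)` whenever
`x, w ≤ 0`, so after the shift `y = x + w` one gets `Φ(w) ≤ e^{-|w|^β/β} Φ(0) = e^{-|w|^β/β} / 2`
for `w ≤ 0`. A level `t < 1/2` is only reached at some `w < 0`, since `Φ` is monotone
with `Φ(0) = 1/2`.
-/

open MeasureTheory Set Real

theorem setIntegral_Iic_comp_add_right {E : Type*} [NormedAddCommGroup E] [NormedSpace ℝ E]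
    (f : ℝ → E) (c d : ℝ) : ∫ x in Iic c, f (x + d) = ∫ y in Iic (c + d), f y := by
  have h := (measurePreserving_add_right volume d).setIntegral_preimage_emb
    (Homeomorph.addRight d).measurableEmbedding f (Iic (c + d))
  simpa using h

theorem phiBeta_neg (β y : ℝ) : phiBeta β (-y) = phiBeta β y := by
  simp [phiBeta]

theorem phiBeta_eq_const_mul_exp (β y : ℝ) :
    phiBeta β y = 1 / (2 * β ^ (1 / β) * Gamma (1 + 1 / β)) * exp (-(1 / β) * |y| ^ β) := by
  simp only [phiBeta]; ring_nf

section

variable {β : ℝ}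

theorem phiBeta_nonneg (hβ : 0 < β) (y : ℝ) : 0 ≤ phiBeta β y := by
  unfold phiBeta; positivity

theorem integrableOn_phiBeta_Ioi (hβ : 0 < β) : IntegrableOn (phiBeta β) (Ioi 0) := by
  have h := (integrableOn_rpow_mul_exp_neg_mul_rpow (s := 0) (by norm_num) hβ
    (one_div_pos.mpr hβ)).const_mul (1 / (2 * β ^ (1 / β) * Gamma (1 + 1 / β)))
  refine IntegrableOn.congr_fun h (fun x hx => ?_) measurableSet_Ioi
  rw [phiBeta_eq_const_mul_exp, abs_of_pos (mem_Ioi.mp hx), rpow_zero, one_mul]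

theorem integrable_phiBeta (hβ : 0 < β) : Integrable (phiBeta β) := by
  have hIic : IntegrableOn (phiBeta β) (Iic 0) := by
    rw [← (Measure.measurePreserving_neg volume).integrableOn_comp_preimage
      (Homeomorph.neg ℝ).measurableEmbedding]
    have hcomp : phiBeta β ∘ Neg.neg = phiBeta β := funext (phiBeta_neg β)
    rw [hcomp, neg_preimage, neg_Iic, neg_zero]
    exact (integrableOn_Ici_iff_integrableOn_Ioi).mpr (integrableOn_phiBeta_Ioi hβ)
  have h := hIic.union (integrableOn_phiBeta_Ioi hβ)
  rwa [Iic_union_Ioi, integrableOn_univ] at h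

theorem PhiBeta_zero (hβ : 0 < β) : PhiBeta β 0 = 1 / 2 := by
  have hsymm : PhiBeta β 0 = ∫ x in Ioi 0, phiBeta β x := by
    simpa [PhiBeta, phiBeta_neg] using integral_comp_neg_Iic 0 (phiBeta β)
  rw [hsymm, setIntegral_congr_fun measurableSet_Ioi
      (fun x (hx : 0 < x) => by rw [phiBeta_eq_const_mul_exp, abs_of_pos hx]),
    integral_const_mul, integral_exp_neg_mul_rpow hβ (one_div_pos.mpr hβ),
    div_rpow one_pos.le hβ.le, one_rpow, neg_div, rpow_neg hβ.le, one_div (_⁻¹), inv_inv,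
    add_comm (1 / β)]
  field_simp

theorem PhiBeta_mono (hβ : 0 < β) : Monotone (PhiBeta β) := fun _ _ h =>
  setIntegral_mono_set (integrable_phiBeta hβ).integrableOn
    (Filter.Eventually.of_forall (phiBeta_nonneg hβ)) (Iic_subset_Iic.mpr h).eventuallyLE

theorem phiBeta_add_le (hβ : 1 ≤ β) {x w : ℝ} (hx : x ≤ 0) (hw : w ≤ 0) :
    phiBeta β (x + w) ≤ exp (-|w| ^ β / β) * phiBeta β x := by
  have hsuper : |x| ^ β + |w| ^ β ≤ |x + w| ^ β := by
    rw [abs_of_nonpos hx, abs_of_nonpos hw, abs_of_nonpos (add_nonpos hx hw), neg_add]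
    exact add_rpow_le_rpow_add (neg_nonneg.mpr hx) (neg_nonneg.mpr hw) hβ
  simp only [phiBeta, mul_left_comm (exp _), ← exp_add]
  gcongr
  rw [← add_div]
  exact div_le_div_of_nonneg_right (by linarith) (by positivity)

theorem PhiBeta_le_of_nonpos (hβ : 1 ≤ β) {w : ℝ} (hw : w ≤ 0) :
    PhiBeta β w ≤ exp (-|w| ^ β / β) / 2 := by
  have hβ0 : 0 < β := one_pos.trans_le hβ
  calc PhiBeta β w = ∫ x in Iic 0, phiBeta β (x + w) := by
        rw [PhiBeta, setIntegral_Iic_comp_add_right, zero_add]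
    _ ≤ ∫ x in Iic 0, exp (-|w| ^ β / β) * phiBeta β x :=
        setIntegral_mono_on ((integrable_phiBeta hβ0).comp_add_right w).integrableOn
          ((integrable_phiBeta hβ0).integrableOn.const_mul _) measurableSet_Iic
          fun x hx => phiBeta_add_le hβ hx hw
    _ = exp (-|w| ^ β / β) / 2 := by
        rw [integral_const_mul, ← PhiBeta, PhiBeta_zero hβ0, mul_one_div]

end

theorem stmt7 (β : ℝ) (hβ : 1 ≤ β) :
    ∀ t w : ℝ, 0 < t → t < 1 / 2 → PhiBeta β w = t →
      Real.exp (|w| ^ β / β) ≤ 1 / t := by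
  intro t w ht ht2 rfl
  have hβ0 : 0 < β := one_pos.trans_le hβ
  have hw : w ≤ 0 := by
    by_contra! hw
    have := PhiBeta_mono hβ0 hw.le
    rw [PhiBeta_zero hβ0] at this
    linarith
  have := PhiBeta_le_of_nonpos hβ hw
  rw [le_div_iff₀ ht]
  calc exp (|w| ^ β / β) * PhiBeta β w ≤ exp (|w| ^ β / β) * (exp (-|w| ^ β / β) / 2) := by
        gcongr
    _ = 1 / 2 := by rw [neg_div, exp_neg]; field_simp
    _ ≤ 1 := by norm_num
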